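/- arXiv:1401.7899 — 4 statements merged into one kernel-verified Lean document; each statement's English description precedes it below -/
import Mathlib

section
/- Let μ_1, …, μ_p be finite signed measures on ℝ and let A be a p×p real matrix. Then for any index i ∈ {1,…,p}, the Kolmogorov norm of the pushforward of the product measure μ_1 ⊗ ⋯ ⊗ μ_p under the linear map x ↦ Ax is at most 2‖μ_i‖_∞ · ∏_{k≠i} ‖μ_k‖_tv, where ‖·‖_∞ is the Kolmogorov norm and ‖·‖_tv is the total variation norm. -/
open MeasureTheory

/-- Kolmogorov norm of a signed measure on ℝ. -/
noncomputable def kolNorm1 (s : SignedMeasure ℝ) : ℝ := ⨆ x : ℝ, |s (Set.Iic x)|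

/-- Kolmogorov norm of a signed measure on ℝ^p (sup over lower orthants). -/
noncomputable def kolNorm {p : ℕ} (s : SignedMeasure (Fin p → ℝ)) : ℝ :=
  ⨆ x : Fin p → ℝ, |s (Set.Iic x)|

/-- Total variation norm of a signed measure. -/
noncomputable def tvNorm {α : Type*} [MeasurableSpace α] (s : SignedMeasure α) : ℝ :=
  (s.totalVariation Set.univ).toReal

/-- Jordan part of a signed measure on ℝ, selected by a Boolean. -/
noncomputable def jpart (s : SignedMeasure ℝ) (b : Bool) : Measure ℝ :=
  bif b then s.toJordanDecomposition.negPart else s.toJordanDecomposition.posPart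

instance (s : SignedMeasure ℝ) (b : Bool) : IsFiniteMeasure (jpart s b) := by
  cases b <;> simp only [jpart, cond] <;> infer_instance

/-- The product `μ_1 ⊗ ⋯ ⊗ μ_p` of finite signed measures on ℝ, as a signed
measure on ℝ^p, defined by multilinear expansion of the Jordan decompositions. -/
noncomputable def signedPi {p : ℕ} (μ : Fin p → SignedMeasure ℝ) :
    SignedMeasure (Fin p → ℝ) :=
  ∑ α : Fin p → Bool,
    ((-1 : ℝ) ^ (Finset.univ.filter (fun i => α i)).card) •
      (Measure.pi (fun i => jpart (μ i) (α i))).toSignedMeasure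

/-!
Fix `x` and let `S = {z | A z ≤ x}`, a convex set. Expanding `signedPi μ` multilinearly and
integrating out every coordinate except the `i`-th (Fubini), `signedPi μ S` becomes a signed sum,
over the choices `β` of Jordan parts of the other factors, of integrals of `y ↦ μ i (S_y)`, where
`S_y = {t | insertNth i t y ∈ S}`; the total masses of the product measures integrated against add
up to `∏_{k ≠ i} ‖μ_k‖_tv`. Each section `S_y` is an interval, hence the difference of two lower
sets of `ℝ`. A lower set of `ℝ` is `∅`, `ℝ`, `Iic c` or `Iio c`, and by continuity from below
`|μ i L| ≤ ‖μ i‖_∞` for each of them, so `|μ i (S_y)| ≤ 2 ‖μ i‖_∞`.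
-/

open Set

theorem abs_apply_le_tvNorm {α : Type*} [MeasurableSpace α] (s : SignedMeasure α) (E : Set α) :
    |s E| ≤ tvNorm s :=
  (s.norm_le_totalVariation E).trans (measureReal_mono (subset_univ E))

theorem abs_apply_Iic_le_kolNorm1 (s : SignedMeasure ℝ) (a : ℝ) : |s (Iic a)| ≤ kolNorm1 s :=
  le_ciSup (f := fun b => |s (Iic b)|)
    ⟨tvNorm s, by rintro _ ⟨b, rfl⟩; exact abs_apply_le_tvNorm s _⟩ a

theorem kolNorm1_nonneg (s : SignedMeasure ℝ) : 0 ≤ kolNorm1 s :=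
  (abs_nonneg _).trans (abs_apply_Iic_le_kolNorm1 s 0)

theorem abs_apply_iUnion_Iic_le_kolNorm1 (s : SignedMeasure ℝ) {u : ℕ → ℝ} (hu : Monotone u) :
    |s (⋃ n, Iic (u n))| ≤ kolNorm1 s :=
  le_of_tendsto' (VectorMeasure.tendsto_vectorMeasure_iUnion_atTop_nat
      (fun _ _ h => Iic_subset_Iic.2 (hu h)) fun _ => measurableSet_Iic).abs
    fun n => abs_apply_Iic_le_kolNorm1 s (u n)

theorem IsLowerSet.eq_empty_or_univ_or_Iic_or_Iio {α : Type*} [ConditionallyCompleteLinearOrder α]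
    {L : Set α} (hL : IsLowerSet L) :
    L = ∅ ∨ L = univ ∨ (∃ c, L = Iic c) ∨ ∃ c, L = Iio c := by
  rcases L.eq_empty_or_nonempty with hempty | hne
  · exact Or.inl hempty
  by_cases hbdd : BddAbove L
  · by_cases hmem : sSup L ∈ L
    · exact Or.inr <| Or.inr <| Or.inl ⟨sSup L, Subset.antisymm (fun _ => (le_csSup hbdd ·))
        fun _ ht => hL ht hmem⟩
    · refine Or.inr <| Or.inr <| Or.inr ⟨sSup L, Subset.antisymm
        (fun t ht => (le_csSup hbdd ht).lt_of_ne fun h => hmem (h ▸ ht)) fun t ht => ?_⟩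
      obtain ⟨a, ha, hta⟩ := exists_lt_of_lt_csSup hne ht
      exact hL hta.le ha
  · refine Or.inr <| Or.inl <| eq_univ_of_forall fun t => ?_
    obtain ⟨a, ha, hta⟩ := not_bddAbove_iff.1 hbdd t
    exact hL hta.le ha

theorem abs_apply_le_kolNorm1_of_isLowerSet (s : SignedMeasure ℝ) {L : Set ℝ} (hL : IsLowerSet L) :
    |s L| ≤ kolNorm1 s := by
  rcases hL.eq_empty_or_univ_or_Iic_or_Iio with rfl | rfl | ⟨c, rfl⟩ | ⟨c, rfl⟩
  · simpa using kolNorm1_nonneg s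
  · rw [← iUnion_eq_univ_iff.2 fun t => exists_nat_ge t]
    exact abs_apply_iUnion_Iic_le_kolNorm1 s Nat.mono_cast
  · exact abs_apply_Iic_le_kolNorm1 s c
  · obtain ⟨u, hu, hlt, hlim⟩ := exists_seq_strictMono_tendsto c
    rw [← iUnion_Iic_eq_Iio_of_lt_of_tendsto hlt hlim]
    exact abs_apply_iUnion_Iic_le_kolNorm1 s hu.monotone

theorem Set.OrdConnected.isLowerSet_lowerClosure_diff {α : Type*} [Preorder α] {T : Set α}
    (hT : T.OrdConnected) : IsLowerSet ((lowerClosure T : Set α) \ T) := by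
  rintro a b hba ⟨⟨c, hcT, hac⟩, haT⟩
  exact ⟨⟨c, hcT, hba.trans hac⟩, fun hbT => haT (hT.out hbT hcT ⟨hba, hac⟩)⟩

theorem abs_apply_le_two_mul_kolNorm1_of_ordConnected (s : SignedMeasure ℝ) {T : Set ℝ}
    (hT : T.OrdConnected) : |s T| ≤ 2 * kolNorm1 s := by
  have hL : IsLowerSet (lowerClosure T : Set ℝ) := (lowerClosure T).lower
  have hD := hT.isLowerSet_lowerClosure_diff
  rw [← sdiff_sdiff_cancel_left (subset_lowerClosure : T ⊆ lowerClosure T),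
    VectorMeasure.of_sdiff hD.ordConnected.measurableSet hL.ordConnected.measurableSet
      sdiff_subset]
  linarith [abs_sub (s (lowerClosure T : Set ℝ)) (s ((lowerClosure T : Set ℝ) \ T)),
    abs_apply_le_kolNorm1_of_isLowerSet s hL, abs_apply_le_kolNorm1_of_isLowerSet s hD]

theorem Convex.ordConnected_preimage_insertNth {𝕜 : Type*} [Field 𝕜] [LinearOrder 𝕜]
    [IsStrictOrderedRing 𝕜] {n : ℕ} {S : Set (Fin (n + 1) → 𝕜)} (hS : Convex 𝕜 S)
    (i : Fin (n + 1)) (y : Fin n → 𝕜) : {t : 𝕜 | i.insertNth t y ∈ S}.OrdConnected := by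
  rw [← convex_iff_ordConnected]
  intro t₁ h₁ t₂ h₂ a b ha hb hab
  show i.insertNth (a • t₁ + b • t₂) y ∈ S
  convert hS h₁ h₂ ha hb hab using 1
  ext k
  rcases i.eq_self_or_eq_succAbove k with rfl | ⟨j, rfl⟩
  · simp
  · simp [← add_mul, hab]

theorem Fin.prod_univ_erase_eq_prod_succAbove {M : Type*} [CommMonoid M] {n : ℕ}
    (g : Fin (n + 1) → M) (i : Fin (n + 1)) :
    ∏ k ∈ Finset.univ.erase i, g k = ∏ j, g (i.succAbove j) := by
  rw [Fin.univ_succAbove _ i, Finset.erase_cons, Finset.prod_map]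
  rfl

namespace MeasureTheory

variable {X Y : Type*} [MeasurableSpace X] [MeasurableSpace Y]

theorem Measure.integrable_measureReal_preimage_prodMk (ν : Measure X) (ρ : Measure Y)
    [IsFiniteMeasure ν] [IsFiniteMeasure ρ] {E : Set (X × Y)} (hE : MeasurableSet E) :
    Integrable (fun y => ν.real ((·, y) ⁻¹' E)) ρ :=
  integrable_toReal_of_lintegral_ne_top (measurable_measure_prodMk_right hE).aemeasurable
    (by rw [← Measure.prod_apply_symm hE]; exact measure_ne_top _ _)

theorem Measure.measureReal_prod_apply_symm (ν : Measure X) (ρ : Measure Y)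
    [IsFiniteMeasure ν] [IsFiniteMeasure ρ] {E : Set (X × Y)} (hE : MeasurableSet E) :
    (ν.prod ρ).real E = ∫ y, ν.real ((·, y) ⁻¹' E) ∂ρ := by
  rw [measureReal_def, Measure.prod_apply_symm hE,
    ← integral_toReal (measurable_measure_prodMk_right hE).aemeasurable
      (ae_of_all _ fun _ => measure_lt_top _ _)]
  rfl

theorem SignedMeasure.integral_apply_preimage_prodMk (s : SignedMeasure X) (ρ : Measure Y)
    [IsFiniteMeasure ρ] {E : Set (X × Y)} (hE : MeasurableSet E) :
    ∫ y, s ((·, y) ⁻¹' E) ∂ρ = (s.toJordanDecomposition.posPart.prod ρ).real E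
      - (s.toJordanDecomposition.negPart.prod ρ).real E := by
  rw [Measure.measureReal_prod_apply_symm _ _ hE, Measure.measureReal_prod_apply_symm _ _ hE,
    ← integral_sub (Measure.integrable_measureReal_preimage_prodMk _ _ hE)
      (Measure.integrable_measureReal_preimage_prodMk _ _ hE)]
  exact integral_congr_ae (ae_of_all _ fun y =>
    s.apply_eq_posPart_real_sub_negPart_real (measurable_prodMk_right hE))

end MeasureTheory

noncomputable def jpartPi {n : ℕ} (μ : Fin n → SignedMeasure ℝ) (β : Fin n → Bool) :
    Measure (Fin n → ℝ) :=
  Measure.pi fun j => jpart (μ j) (β j)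

instance {n : ℕ} (μ : Fin n → SignedMeasure ℝ) (β : Fin n → Bool) :
    IsFiniteMeasure (jpartPi μ β) := by
  unfold jpartPi; infer_instance

theorem neg_one_pow_card_filter_eq_prod_ite {ι : Type*} [Fintype ι] (β : ι → Bool) :
    (-1 : ℝ) ^ (Finset.univ.filter fun j => β j).card = ∏ j, if β j then -1 else 1 := by
  rw [Finset.prod_ite, Finset.prod_const, Finset.prod_const_one, mul_one]

theorem signedPi_apply {n : ℕ} (μ : Fin n → SignedMeasure ℝ) {S : Set (Fin n → ℝ)}
    (hS : MeasurableSet S) :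
    signedPi μ S = ∑ β, (∏ j, if β j then (-1 : ℝ) else 1) * (jpartPi μ β).real S := by
  simp only [signedPi, FunLike.coe_sum, Finset.sum_apply, smul_apply,
    Measure.toSignedMeasure_apply_measurable hS, smul_eq_mul, neg_one_pow_card_filter_eq_prod_ite]
  rfl

theorem jpartPi_insertNth_apply {n : ℕ} (μ : Fin (n + 1) → SignedMeasure ℝ) (i : Fin (n + 1))
    (b : Bool) (β : Fin n → Bool) (S : Set (Fin (n + 1) → ℝ)) :
    jpartPi μ (i.insertNth b β) S =
      ((jpart (μ i) b).prod (jpartPi (fun j => μ (i.succAbove j)) β))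
        ((MeasurableEquiv.piFinSuccAbove (fun _ => ℝ) i).symm ⁻¹' S) := by
  have h := (measurePreserving_piFinSuccAbove
    (fun k => jpart (μ k) ((i.insertNth b β : Fin (n + 1) → Bool) k)) i).symm
  simp only [Fin.insertNth_apply_same, Fin.insertNth_apply_succAbove] at h
  exact (h.measure_preimage_equiv S).symm

theorem sum_jpartPi_real_univ {n : ℕ} (μ : Fin n → SignedMeasure ℝ) :
    ∑ β, (jpartPi μ β).real univ = ∏ j, tvNorm (μ j) := by
  simp only [jpartPi, measureReal_def, Measure.pi_univ, ENNReal.toReal_prod]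
  rw [← Fintype.prod_sum (fun j b => (jpart (μ j) b univ).toReal)]
  refine Finset.prod_congr rfl fun j _ => ?_
  rw [Fintype.sum_bool, tvNorm, SignedMeasure.totalVariation, Measure.add_apply,
    ENNReal.toReal_add (measure_ne_top _ _) (measure_ne_top _ _), add_comm]
  rfl

theorem signedPi_apply_eq_sum_integral {n : ℕ} (μ : Fin (n + 1) → SignedMeasure ℝ)
    (i : Fin (n + 1)) {S : Set (Fin (n + 1) → ℝ)} (hS : MeasurableSet S) :
    signedPi μ S = ∑ β : Fin n → Bool, (∏ j, if β j then (-1 : ℝ) else 1) *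
      ∫ y, μ i {t | i.insertNth t y ∈ S} ∂jpartPi (fun j => μ (i.succAbove j)) β := by
  have hE := hS.preimage (MeasurableEquiv.piFinSuccAbove (fun _ => ℝ) i).symm.measurable
  rw [signedPi_apply μ hS, ← (Fin.insertNthEquiv (fun _ => Bool) i).sum_comp,
    Fintype.sum_prod_type, Finset.sum_comm]
  refine Finset.sum_congr rfl fun β _ => ?_
  change ∑ b : Bool, (∏ k, if (i.insertNth b β : Fin (n + 1) → Bool) k then (-1 : ℝ) else 1) *
    (jpartPi μ (i.insertNth b β)).real S = _
  have hsign : ∀ b : Bool, (∏ k, if (i.insertNth b β : Fin (n + 1) → Bool) k then (-1 : ℝ) else 1)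
      = (if b then -1 else 1) * ∏ j, if β j then (-1 : ℝ) else 1 := fun b => by
    simp [Fin.prod_univ_succAbove _ i]
  simp only [Fintype.sum_bool, hsign, measureReal_def, jpartPi_insertNth_apply, Bool.false_eq_true,
    ↓reduceIte]
  -- `{t | i.insertNth t y ∈ S}` is definitionally the section at `y` of `e.symm ⁻¹' S`,
  -- where `e = MeasurableEquiv.piFinSuccAbove _ i`.
  have hfubini : ∫ y, μ i {t | i.insertNth t y ∈ S} ∂jpartPi (fun j => μ (i.succAbove j)) β =
      ((jpart (μ i) false).prod (jpartPi (fun j => μ (i.succAbove j)) β)).real _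
        - ((jpart (μ i) true).prod (jpartPi (fun j => μ (i.succAbove j)) β)).real _ :=
    SignedMeasure.integral_apply_preimage_prodMk (μ i) _ hE
  rw [hfubini, measureReal_def, measureReal_def]
  ring

theorem abs_signedPi_apply_le_of_convex {n : ℕ} (μ : Fin (n + 1) → SignedMeasure ℝ)
    (i : Fin (n + 1)) {S : Set (Fin (n + 1) → ℝ)} (hS : Convex ℝ S) (hSm : MeasurableSet S) :
    |signedPi μ S| ≤ 2 * kolNorm1 (μ i) * ∏ j, tvNorm (μ (i.succAbove j)) := by
  rw [signedPi_apply_eq_sum_integral μ i hSm, ← sum_jpartPi_real_univ, Finset.mul_sum]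
  refine (Finset.abs_sum_le_sum_abs _ _).trans (Finset.sum_le_sum fun β _ => ?_)
  have habs_sign : |∏ j, if β j then (-1 : ℝ) else 1| = 1 := by
    simp [Finset.abs_prod, apply_ite]
  rw [abs_mul, habs_sign, one_mul, ← Real.norm_eq_abs]
  exact norm_integral_le_of_norm_le_const (ae_of_all _ fun y =>
    abs_apply_le_two_mul_kolNorm1_of_ordConnected (μ i) (hS.ordConnected_preimage_insertNth i y))

/-- `‖L_A(μ_1 ⊗ ⋯ ⊗ μ_p)‖_∞ ≤ 2‖μ_i‖_∞ ∏_{k≠i} ‖μ_k‖_tv`. -/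
theorem kolNorm_map_signedPi_le {p : ℕ} (μ : Fin p → SignedMeasure ℝ)
    (A : Matrix (Fin p) (Fin p) ℝ) (i : Fin p) :
    kolNorm ((signedPi μ).map A.mulVec) ≤
      2 * kolNorm1 (μ i) * ∏ k ∈ Finset.univ.erase i, tvNorm (μ k) := by
  obtain ⟨n, rfl⟩ : ∃ n, p = n + 1 := ⟨p - 1, by have := i.pos; omega⟩
  have hA : Measurable A.mulVec := A.mulVecLin.continuous_of_finiteDimensional.measurable
  refine ciSup_le fun x => ?_
  rw [VectorMeasure.map_apply _ hA measurableSet_Iic, Fin.prod_univ_erase_eq_prod_succAbove]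
  exact abs_signedPi_apply_le_of_convex μ i ((convex_Iic x).linear_preimage A.mulVecLin)
    (hA measurableSet_Iic)
end

section
/- Let ζ be a probability measure on ℝ and ν a finite signed measure on ℝ with ‖ν‖_∞ ≤ 1 (Kolmogorov norm), and let A be a p×p real matrix. Then the Kolmogorov norm of the signed measure ∑_{k=1}^p L_A(ζ^{⊗(k-1)} ⊗ ν ⊗ ζ^{⊗(p-k)}) is at most 2p. -/
/-! Fix `x`. After splitting `ν` into its Jordan parts, Fubini writes the `k`-th summand at
`Iic x` as the `ζ^{⊗(p-1)}`-integral of `y ↦ ν(S_y)`, where `S_y` is the slice of the convex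
set `A⁻¹(Iic x)` through `y` along coordinate `k`. Each `S_y` is an interval of `ℝ`, and every
interval `I` satisfies `|ν I| ≤ 2 ‖ν‖_∞`: `I = L \ (L \ U)` with `L`, `U` its lower and upper
closures, and a lower set of `ℝ` is empty, some `Iic a`, or an increasing union of countably
many `Iic a`, so by continuity `|ν| ≤ ‖ν‖_∞` on lower sets. Summing over `k` gives `2p`. -/

open MeasureTheory

open Set

section KolmogorovNorm

variable {ν : SignedMeasure ℝ} {C : ℝ}

lemma abs_apply_Iic_le_of_kolNorm1_le (hν : kolNorm1 ν ≤ C) (x : ℝ) : |ν (Iic x)| ≤ C :=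
  (le_ciSup ⟨ν.totalVariation.real univ, forall_mem_range.2 fun y => by
    simpa only [Real.norm_eq_abs] using
      (ν.norm_le_totalVariation _).trans (measureReal_mono (subset_univ _))⟩ x).trans hν

lemma abs_apply_iUnion_Iic_le_of_kolNorm1_le (hν : kolNorm1 ν ≤ C) {u : ℕ → ℝ}
    (hu : Monotone u) : |ν (⋃ n, Iic (u n))| ≤ C :=
  le_of_tendsto' (ν.tendsto_vectorMeasure_iUnion_atTop_nat (monotone_Iic.comp hu)
    fun _ => measurableSet_Iic).abs fun n => abs_apply_Iic_le_of_kolNorm1_le hν (u n)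

lemma IsLowerSet.abs_apply_le_of_kolNorm1_le {L : Set ℝ} (hL : IsLowerSet L)
    (hν : kolNorm1 ν ≤ C) : |ν L| ≤ C := by
  rcases L.eq_empty_or_nonempty with rfl | hne
  · simpa using (abs_nonneg _).trans (abs_apply_Iic_le_of_kolNorm1_le hν 0)
  by_cases hbdd : BddAbove L
  · by_cases hmem : sSup L ∈ L
    · have : L = Iic (sSup L) :=
        Subset.antisymm (fun t ht => le_csSup hbdd ht) fun t ht => hL ht hmem
      exact this ▸ abs_apply_Iic_le_of_kolNorm1_le hν _
    · obtain ⟨u, hu, hlt, hlim⟩ := exists_seq_strictMono_tendsto (sSup L)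
      have : L = ⋃ n, Iic (u n) := by
        rw [iUnion_Iic_eq_Iio_of_lt_of_tendsto hlt hlim]
        refine Subset.antisymm (fun t ht => (le_csSup hbdd ht).lt_of_ne ?_) fun t ht => ?_
        · rintro rfl; exact hmem ht
        · obtain ⟨l, hl, htl⟩ := exists_lt_of_lt_csSup hne ht
          exact hL htl.le hl
      exact this ▸ abs_apply_iUnion_Iic_le_of_kolNorm1_le hν hu.monotone
  · have : L = ⋃ n : ℕ, Iic (n : ℝ) := by
      rw [iUnion_Iic_of_not_bddAbove_range]
      · refine eq_univ_of_forall fun t => ?_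
        obtain ⟨l, hl, htl⟩ := not_bddAbove_iff.1 hbdd t
        exact hL htl.le hl
      · exact not_bddAbove_iff.2 fun x =>
          let ⟨n, hn⟩ := exists_nat_gt x
          ⟨n, ⟨n, rfl⟩, hn⟩
    exact this ▸ abs_apply_iUnion_Iic_le_of_kolNorm1_le hν Nat.mono_cast

lemma Set.OrdConnected.abs_apply_le_two_mul_of_kolNorm1_le {I : Set ℝ} (hI : I.OrdConnected)
    (hν : kolNorm1 ν ≤ C) : |ν I| ≤ 2 * C := by
  set L : Set ℝ := ↑(lowerClosure I)
  set U : Set ℝ := ↑(upperClosure I)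
  have hL : IsLowerSet L := (lowerClosure I).lower
  have hLU : IsLowerSet (L \ U) := hL.inter (upperClosure I).upper.compl
  have hsplit : ν I + ν (L \ U) = ν L := by
    have hUL : U ∩ L = I := hI.upperClosure_inter_lowerClosure
    rw [← sdiff_inter_self_eq_sdiff, hUL]
    exact VectorMeasure.of_add_of_sdiff hI.measurableSet hL.ordConnected.measurableSet
      (hUL ▸ inter_subset_right)
  rw [eq_sub_of_add_eq hsplit, two_mul]
  exact (abs_sub _ _).trans
    (add_le_add (hL.abs_apply_le_of_kolNorm1_le hν) (hLU.abs_apply_le_of_kolNorm1_le hν))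

end KolmogorovNorm

namespace MeasureTheory

lemma Measure.toSignedMeasure_toJordanDecomposition {α : Type*} [MeasurableSpace α]
    (ζ : Measure α) [IsFiniteMeasure ζ] :
    ζ.toSignedMeasure.toJordanDecomposition = ⟨ζ, 0, .zero_right⟩ :=
  SignedMeasure.toJordanDecomposition_eq <| by
    simp [JordanDecomposition.toSignedMeasure, Measure.toSignedMeasure_zero]

section Slices

variable {n : ℕ} {X : Type*} [MeasurableSpace X] {T : Set (Fin (n + 1) → X)}

lemma measurable_insertNth_left (k : Fin (n + 1)) (y : Fin n → X) :
    Measurable fun t : X => (k.insertNth t y : Fin (n + 1) → X) :=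
  (MeasurableEquiv.piFinSuccAbove (fun _ => X) k).symm.measurable.comp measurable_prodMk_right

lemma measurable_measure_insertNth_mem (μ : Measure X) [SFinite μ] (k : Fin (n + 1))
    (hT : MeasurableSet T) : Measurable fun y : Fin n → X => μ {t | k.insertNth t y ∈ T} :=
  measurable_measure_prodMk_right
    ((MeasurableEquiv.piFinSuccAbove (fun _ => X) k).symm.measurable hT)

lemma Measure.pi_apply_eq_lintegral_insertNth (μ : Fin (n + 1) → Measure X)
    [∀ i, SigmaFinite (μ i)] (k : Fin (n + 1)) (hT : MeasurableSet T) :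
    Measure.pi μ T =
      ∫⁻ y, μ k {t | k.insertNth t y ∈ T} ∂Measure.pi fun j => μ (k.succAbove j) := by
  rw [← (measurePreserving_piFinSuccAbove μ k).symm.measure_preimage hT.nullMeasurableSet,
    Measure.prod_apply_symm ((MeasurableEquiv.piFinSuccAbove (fun _ => X) k).symm.measurable hT)]
  rfl

lemma Measure.measureReal_pi_eq_integral_insertNth (μ : Fin (n + 1) → Measure X)
    [∀ i, IsFiniteMeasure (μ i)] (k : Fin (n + 1)) (hT : MeasurableSet T) :
    (Measure.pi μ).real T =
      ∫ y, (μ k).real {t | k.insertNth t y ∈ T} ∂Measure.pi fun j => μ (k.succAbove j) := by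
  rw [measureReal_def, Measure.pi_apply_eq_lintegral_insertNth μ k hT,
    ← integral_toReal (measurable_measure_insertNth_mem _ k hT).aemeasurable
      (ae_of_all _ fun _ => measure_lt_top _ _)]
  rfl

lemma integrable_measureReal_insertNth_mem {μ : Measure X} [IsFiniteMeasure μ]
    {ρ : Measure (Fin n → X)} [IsFiniteMeasure ρ] (k : Fin (n + 1)) (hT : MeasurableSet T) :
    Integrable (fun y => μ.real {t | k.insertNth t y ∈ T}) ρ :=
  .of_bound (measurable_measure_insertNth_mem μ k hT).ennreal_toReal.aestronglyMeasurable
    (μ.real univ) (ae_of_all _ fun _ => by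
      simpa only [Real.norm_eq_abs, abs_of_nonneg measureReal_nonneg] using
        measureReal_mono (subset_univ _))

end Slices

end MeasureTheory

lemma jpart_toSignedMeasure (ζ : Measure ℝ) [IsFiniteMeasure ζ] (b : Bool) :
    jpart ζ.toSignedMeasure b = bif b then 0 else ζ := by
  simp [jpart, Measure.toSignedMeasure_toJordanDecomposition]

lemma signedPi_eq_sub_of_jpart_true_eq_zero {p : ℕ} {μ : Fin p → SignedMeasure ℝ} (k : Fin p)
    (hμ : ∀ i ≠ k, jpart (μ i) true = 0) :
    signedPi μ = (Measure.pi fun i => jpart (μ i) false).toSignedMeasure -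
      (Measure.pi fun i => jpart (μ i) (decide (i = k))).toSignedMeasure := by
  have hvanish : ∀ α : Fin p → Bool, (∃ i ≠ k, α i = true) →
      Measure.pi (fun i => jpart (μ i) (α i)) = 0 := by
    rintro α ⟨i, hik, hi⟩
    rw [← Measure.measure_univ_eq_zero, Measure.pi_univ]
    exact Finset.prod_eq_zero (Finset.mem_univ i) (by rw [hi, hμ i hik]; rfl)
  rw [signedPi, Fintype.sum_eq_add (fun _ => false) (fun i => decide (i = k))]
  · have h0 : (Finset.univ.filter fun _ : Fin p => false = true).card = 0 := by simp
    have h1 : (Finset.univ.filter fun i => decide (i = k) = true).card = 1 := by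
      simp [Finset.filter_eq']
    rw [h0, h1, pow_zero, pow_one, one_smul, sub_eq_add_neg]
    exact congrArg (_ + ·) (neg_one_smul ℝ (M := SignedMeasure (Fin p → ℝ)) _)
  · exact fun h => by simpa using congrFun h k
  · rintro α ⟨h0, h1⟩
    suffices h : ∃ i ≠ k, α i = true by simp [hvanish α h]
    by_contra! h
    have hα : α = fun i => decide (i = k) && α k := by
      funext i
      by_cases hi : i = k
      · simp [hi]
      · simpa [hi] using h i hi
    cases hαk : α k
    · exact h0 (by rw [hα, hαk]; simp)
    · exact h1 (by rw [hα, hαk]; simp)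

lemma signedPi_ite_apply_eq_integral {n : ℕ} (ζ : Measure ℝ) [IsFiniteMeasure ζ]
    (ν : SignedMeasure ℝ) (k : Fin (n + 1)) {T : Set (Fin (n + 1) → ℝ)}
    (hT : MeasurableSet T) :
    signedPi (fun i => if i = k then ν else ζ.toSignedMeasure) T =
      ∫ y, ν {t | k.insertNth t y ∈ T} ∂Measure.pi fun _ : Fin n => ζ := by
  set μ : Fin (n + 1) → SignedMeasure ℝ := fun i => if i = k then ν else ζ.toSignedMeasure
  have hslice : ∀ β : Fin (n + 1) → Bool, (∀ j, β (k.succAbove j) = false) →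
      (Measure.pi fun i => jpart (μ i) (β i)).real T =
        ∫ y, (jpart ν (β k)).real {t | k.insertNth t y ∈ T}
          ∂Measure.pi fun _ : Fin n => ζ := by
    intro β hβ
    rw [Measure.measureReal_pi_eq_integral_insertNth _ k hT]
    simp [μ, hβ, Fin.succAbove_ne, jpart_toSignedMeasure]
  rw [signedPi_eq_sub_of_jpart_true_eq_zero k fun i hi => by simp [μ, hi, jpart_toSignedMeasure],
    sub_apply, Measure.toSignedMeasure_apply_measurable hT,
    Measure.toSignedMeasure_apply_measurable hT, hslice _ fun _ => rfl,
    hslice _ fun j => decide_eq_false (k.succAbove_ne j), ← integral_sub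
      (integrable_measureReal_insertNth_mem k hT) (integrable_measureReal_insertNth_mem k hT)]
  refine integral_congr_ae (ae_of_all _ fun y => ?_)
  simp only [jpart, decide_true, cond_true, cond_false]
  exact (ν.apply_eq_posPart_real_sub_negPart_real
    (hT.preimage (measurable_insertNth_left k y))).symm

lemma Convex.insertNth_preimage {n : ℕ} {T : Set (Fin (n + 1) → ℝ)} (hT : Convex ℝ T)
    (k : Fin (n + 1)) (y : Fin n → ℝ) : Convex ℝ {t : ℝ | k.insertNth t y ∈ T} := by
  intro t₁ h₁ t₂ h₂ a b ha hb hab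
  show k.insertNth (a • t₁ + b • t₂) y ∈ T
  convert hT h₁ h₂ ha hb hab using 1
  funext i
  rcases k.eq_self_or_eq_succAbove i with rfl | ⟨j, rfl⟩
  · simp
  · simp [← add_mul, hab]

lemma abs_signedPi_ite_apply_le {p : ℕ} (ζ : Measure ℝ) [IsProbabilityMeasure ζ]
    {ν : SignedMeasure ℝ} {C : ℝ} (hν : kolNorm1 ν ≤ C) (k : Fin p)
    {T : Set (Fin p → ℝ)} (hT : MeasurableSet T) (hTc : Convex ℝ T) :
    |signedPi (fun i => if i = k then ν else ζ.toSignedMeasure) T| ≤ 2 * C := by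
  obtain ⟨n, rfl⟩ := Nat.exists_eq_succ_of_ne_zero k.pos.ne'
  rw [signedPi_ite_apply_eq_integral ζ ν k hT]
  have hslice : ∀ y, ‖ν {t | k.insertNth t y ∈ T}‖ ≤ 2 * C := fun y =>
    (hTc.insertNth_preimage k y).ordConnected.abs_apply_le_two_mul_of_kolNorm1_le hν
  simpa using norm_integral_le_of_norm_le_const
    (μ := Measure.pi fun _ : Fin n => ζ) (ae_of_all _ hslice)

/-- If `ζ` is a probability measure on ℝ, `ν` a finite signed measure with
`‖ν‖_∞ ≤ 1`, and `A` a `p×p` real matrix, then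
`‖∑_{k=1}^p L_A(ζ^{⊗(k-1)} ⊗ ν ⊗ ζ^{⊗(p-k)})‖_∞ ≤ 2p`. -/
theorem kolNorm_sum_map_signedPi_le
    {p : ℕ} (ζ : Measure ℝ) [IsProbabilityMeasure ζ]
    (ν : SignedMeasure ℝ) (hν : kolNorm1 ν ≤ 1)
    (A : Matrix (Fin p) (Fin p) ℝ) :
    kolNorm (∑ k : Fin p,
      (signedPi (fun i => if i = k then ν else ζ.toSignedMeasure)).map A.mulVec) ≤
      2 * p := by
  set σ : Fin p → SignedMeasure (Fin p → ℝ) :=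
    fun k => signedPi (fun i => if i = k then ν else ζ.toSignedMeasure)
  have hA : Measurable A.mulVec := A.mulVecLin.continuous_of_finiteDimensional.measurable
  refine ciSup_le fun x => ?_
  have hT : MeasurableSet (A.mulVec ⁻¹' Iic x) := hA measurableSet_Iic
  have hTc : Convex ℝ (A.mulVec ⁻¹' Iic x) := (convex_Iic x).linear_preimage A.mulVecLin
  calc |(∑ k, (σ k).map A.mulVec) (Iic x)| = |∑ k, σ k (A.mulVec ⁻¹' Iic x)| := by
        simp [VectorMeasure.map_apply _ hA measurableSet_Iic]
    _ ≤ ∑ k, |σ k (A.mulVec ⁻¹' Iic x)| := Finset.abs_sum_le_sum_abs _ _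
    _ ≤ ∑ _k : Fin p, 2 * 1 := Finset.sum_le_sum fun k _ =>
        abs_signedPi_ite_apply_le ζ hν k hT hTc
    _ = 2 * p := by simp [mul_comm]
end

section
/- Let ξ, ζ be probability measures on ℝ with ξ ≠ ζ, let P_e(β) = βξ + (1-β)ζ, and let A be a p×p real matrix. Then as β → 0, the signed measures (L_A(P_e(β)^{⊗p}) − L_A(ζ^{⊗p})) / ‖P_e(β) − ζ‖_∞ converge in Kolmogorov norm to ∑_{k=1}^p L_A(ζ^{⊗(k-1)} ⊗ ν ⊗ ζ^{⊗(p-k)}), where ν = (ξ − ζ)/‖ξ − ζ‖_∞. -/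
open MeasureTheory Filter

/-!
Write `ν = ξ - ζ`, so that `P_e(β) = ζ + β • ν` and `‖P_e(β) - ζ‖_∞ = β ‖ν‖_∞`. The product
`signedPi` is multilinear, hence `signedPi (ζ + β • ν) = ∑_S β ^ |S| • π_S`, where `π_S` has the
factor `ν` on the coordinates in `S` and `ζ` elsewhere. After dividing by `β ‖ν‖_∞`, the term
`S = ∅` cancels `L_A(ζ^{⊗p})` and the singletons `S = {k}` give exactly the limit; what is left
is a combination of the fixed signed measures `L_A π_S`, `|S| ≥ 2`, with coefficients
`β ^ (|S| - 1) / ‖ν‖_∞ → 0`, and the Kolmogorov norm is dominated by the total variation.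
-/

open Finset

theorem MeasureTheory.SignedMeasure.ext_of_univ_pi {ι : Type*} [Finite ι] {α : ι → Type*}
    [∀ i, MeasurableSpace (α i)] {s t : SignedMeasure (∀ i, α i)}
    (h : ∀ E : ∀ i, Set (α i), (∀ i, MeasurableSet (E i)) →
      s (Set.univ.pi E) = t (Set.univ.pi E)) : s = t := by
  refine VectorMeasure.ext_of_generateFrom _ ?_ generateFrom_pi.symm isPiSystem_pi ?_
  · rintro _ ⟨E, hE, rfl⟩
    exact h E fun i => hE i (Set.mem_univ i)
  · simpa using h (fun _ => Set.univ) fun _ => MeasurableSet.univ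

theorem apply_eq_sum_jpart (s : SignedMeasure ℝ) {E : Set ℝ} (hE : MeasurableSet E) :
    s E = ∑ b : Bool, (if b then -1 else 1) * (jpart s b).real E := by
  simp [jpart, s.apply_eq_posPart_real_sub_negPart_real hE, sub_eq_add_neg, add_comm]

theorem signedPi_apply_univ_pi {p : ℕ} (μ : Fin p → SignedMeasure ℝ) {E : Fin p → Set ℝ}
    (hE : ∀ i, MeasurableSet (E i)) :
    signedPi μ (Set.univ.pi E) = ∏ i, μ i (E i) := by
  simp only [apply_eq_sum_jpart _ (hE _), Fintype.prod_sum, signedPi, FunLike.coe_sum,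
    Finset.sum_apply, smul_apply, smul_eq_mul,
    Measure.toSignedMeasure_apply_measurable (MeasurableSet.univ_pi hE), measureReal_def,
    Measure.pi_pi, ENNReal.toReal_prod, prod_mul_distrib, prod_ite, prod_const, one_pow, mul_one]

theorem signedPi_add_smul {p : ℕ} (μ ν : Fin p → SignedMeasure ℝ) (β : ℝ) :
    signedPi (fun i => μ i + β • ν i) =
      ∑ S : Finset (Fin p), β ^ #S • signedPi (fun i => if i ∈ S then ν i else μ i) := by
  refine SignedMeasure.ext_of_univ_pi fun E hE => ?_
  simp only [signedPi_apply_univ_pi _ hE, FunLike.coe_sum, Finset.sum_apply, smul_apply,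
    add_apply, smul_eq_mul]
  have split : ∀ S : Finset (Fin p), ∏ i, (if i ∈ S then ν i else μ i) (E i) =
      (∏ i ∈ S, ν i (E i)) * ∏ i ∈ Sᶜ, μ i (E i) := fun S => by
    rw [← prod_mul_prod_compl S]
    congr 1 <;> refine prod_congr rfl fun i hi => ?_ <;> simp_all
  simp only [add_comm (μ _ _), Fintype.prod_add, split, prod_mul_distrib, prod_const, mul_assoc]

theorem signedPi_ite_smul {p : ℕ} (μ : Fin p → SignedMeasure ℝ) (m : SignedMeasure ℝ)
    (r : ℝ) (k : Fin p) :
    signedPi (fun i => if i = k then r • m else μ i) =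
      r • signedPi (fun i => if i = k then m else μ i) := by
  refine SignedMeasure.ext_of_univ_pi fun E hE => ?_
  have factor : ∀ i, (if i = k then r • m else μ i) (E i) =
      (if i = k then r else 1) * (if i = k then m else μ i) (E i) := by
    intro i; split_ifs <;> simp
  rw [signedPi_apply_univ_pi _ hE, smul_apply, signedPi_apply_univ_pi _ hE, smul_eq_mul]
  simp_rw [factor]
  rw [prod_mul_distrib, prod_ite_eq']
  simp

theorem MeasureTheory.SignedMeasure.abs_apply_le_totalVariation_univ {α : Type*} [MeasurableSpace α]
    (s : SignedMeasure α) (E : Set α) : |s E| ≤ s.totalVariation.real Set.univ :=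
  (s.norm_le_totalVariation E).trans (measureReal_mono (Set.subset_univ E))

theorem kolNorm1_smul (s : SignedMeasure ℝ) {β : ℝ} (hβ : 0 ≤ β) :
    kolNorm1 (β • s) = β * kolNorm1 s := by
  simp only [kolNorm1, Real.mul_iSup_of_nonneg hβ, smul_apply, smul_eq_mul, abs_mul,
    abs_of_nonneg hβ]

theorem kolNorm_sum_smul_le {p : ℕ} {ι : Type*} (t : Finset ι) (a : ι → ℝ)
    (m : ι → SignedMeasure (Fin p → ℝ)) :
    kolNorm (∑ i ∈ t, a i • m i) ≤ ∑ i ∈ t, |a i| * (m i).totalVariation.real Set.univ := by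
  refine Real.iSup_le (fun x => ?_) (by positivity)
  simp only [FunLike.coe_sum, Finset.sum_apply, smul_apply, smul_eq_mul]
  refine (abs_sum_le_sum_abs _ _).trans (sum_le_sum fun i _ => ?_)
  rw [abs_mul]
  exact mul_le_mul_of_nonneg_left ((m i).abs_apply_le_totalVariation_univ _) (abs_nonneg _)

theorem tendsto_kolNorm_sum_smul {p : ℕ} {ι X : Type*} [Fintype ι] {l : Filter X}
    {a : ι → X → ℝ} (ha : ∀ i, Tendsto (a i) l (nhds 0)) (m : ι → SignedMeasure (Fin p → ℝ)) :
    Tendsto (fun x => kolNorm (∑ i, a i x • m i)) l (nhds 0) := by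
  have hbound :
      Tendsto (fun x => ∑ i, |a i x| * (m i).totalVariation.real Set.univ) l (nhds 0) := by
    simpa using tendsto_finsetSum _ fun i _ => (ha i).abs.mul_const _
  exact squeeze_zero (fun _ => Real.iSup_nonneg fun _ => abs_nonneg _)
    (fun _ => kolNorm_sum_smul_le _ _ _) hbound

theorem inv_smul_sum_pow_card_smul_sub_sum_singleton {ι 𝕜 V : Type*} [Fintype ι] [DecidableEq ι]
    [Field 𝕜] [AddCommGroup V] [Module 𝕜 V] {β : 𝕜} (hβ : β ≠ 0) (f : Finset ι → V) :
    β⁻¹ • (∑ S, β ^ #S • f S - f ∅) - ∑ k, f {k} =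
      ∑ S, (if 2 ≤ #S then β ^ (#S - 1) else 0) • f S := by
  have hempty : f ∅ = ∑ S, if S = ∅ then f S else 0 := by simp
  have hsingleton : ∑ k, f {k} = ∑ S, if #S = 1 then f S else 0 := by
    rw [← sum_filter, ← Finset.powerset_univ, ← powersetCard_eq_filter, powersetCard_one, sum_map]
    rfl
  rw [hempty, hsingleton, ← sum_sub_distrib, smul_sum, ← sum_sub_distrib]
  refine sum_congr rfl fun S _ => ?_
  obtain hS | hS | hS : #S = 0 ∨ #S = 1 ∨ 2 ≤ #S := by omega
  · obtain rfl := card_eq_zero.1 hS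
    simp
  · have : S ≠ ∅ := by rintro rfl; simp at hS
    simp [hS, this, smul_smul, hβ]
  · have : S ≠ ∅ := by rintro rfl; simp at hS
    rw [if_pos hS, if_neg this, if_neg (by omega), sub_zero, sub_zero, smul_smul,
      pow_sub₀ _ hβ (by omega : 1 ≤ #S), pow_one, mul_comm]

theorem tendsto_normalized_map_signedPi_general
    {p : ℕ} (ξ ζ : Measure ℝ) [IsProbabilityMeasure ξ] [IsProbabilityMeasure ζ]
    (A : Matrix (Fin p) (Fin p) ℝ) :
    Tendsto (fun β : ℝ =>
        kolNorm
          ((kolNorm1 ((β • ξ.toSignedMeasure + (1 - β) • ζ.toSignedMeasure) -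
              ζ.toSignedMeasure))⁻¹ •
            ((signedPi (fun _ : Fin p =>
                β • ξ.toSignedMeasure + (1 - β) • ζ.toSignedMeasure)).map A.mulVec -
              (signedPi (fun _ : Fin p => ζ.toSignedMeasure)).map A.mulVec) -
          ∑ k : Fin p,
            (signedPi (fun i => if i = k then
                (kolNorm1 (ξ.toSignedMeasure - ζ.toSignedMeasure))⁻¹ •
                  (ξ.toSignedMeasure - ζ.toSignedMeasure)
              else ζ.toSignedMeasure)).map A.mulVec))
      (nhdsWithin 0 (Set.Ioo (0 : ℝ) 1)) (nhds 0) := by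
  set ζ' := ζ.toSignedMeasure
  set ν := ξ.toSignedMeasure - ζ'
  set c := kolNorm1 ν
  let L := VectorMeasure.mapₗ (R := ℝ) (M := ℝ) (m := MeasurableSpace.pi) A.mulVec
  let f : Finset (Fin p) → SignedMeasure (Fin p → ℝ) :=
    fun S => c⁻¹ • L (signedPi fun i => if i ∈ S then ν else ζ')
  let a : Finset (Fin p) → ℝ → ℝ := fun S β => if 2 ≤ #S then β ^ (#S - 1) else 0
  have ha : ∀ S, Tendsto (a S) (nhdsWithin 0 (Set.Ioo 0 1)) (nhds 0) := fun S => by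
    by_cases hS : 2 ≤ #S
    · simpa [a, hS] using ((continuous_pow _).tendsto' 0 0 (zero_pow (by omega))).mono_left
        nhdsWithin_le_nhds
    · simp [a, hS]
  refine (tendsto_kolNorm_sum_smul ha f).congr' ?_
  filter_upwards [self_mem_nhdsWithin] with β hβ
  have hmix : β • ξ.toSignedMeasure + (1 - β) • ζ' = ζ' + β • ν := by module
  refine congrArg kolNorm (Eq.symm ?_)
  calc _ = β⁻¹ • (∑ S, β ^ #S • f S - f ∅) - ∑ k, f {k} := by
        rw [hmix, add_sub_cancel_left, kolNorm1_smul ν hβ.1.le,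
          signedPi_add_smul (fun _ => ζ') (fun _ => ν)]
        simp_rw [signedPi_ite_smul, ← VectorMeasure.mapₗ_apply (R := ℝ), map_sum, map_smul]
        simp only [f, L, c, Finset.notMem_empty, if_false, Finset.mem_singleton, mul_inv,
          mul_smul, smul_sub, smul_sum, smul_comm (kolNorm1 ν)⁻¹ (β ^ _)]
    _ = ∑ S, a S β • f S := inv_smul_sum_pow_card_smul_sub_sum_singleton hβ.1.ne' f

/-- Let `ξ ≠ ζ` be probability measures on ℝ, `P_e(β) = βξ + (1-β)ζ`, and `A` a
`p×p` matrix. As `β → 0` (within `(0,1)`), the signed measures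
`(L_A(P_e(β)^{⊗p}) − L_A(ζ^{⊗p}))/‖P_e(β) − ζ‖_∞` converge in Kolmogorov norm
to `∑_{k=1}^p L_A(ζ^{⊗(k-1)} ⊗ ν ⊗ ζ^{⊗(p-k)})`, with `ν = (ξ−ζ)/‖ξ−ζ‖_∞`. -/
theorem tendsto_normalized_map_signedPi
    {p : ℕ} (ξ ζ : Measure ℝ) [IsProbabilityMeasure ξ] [IsProbabilityMeasure ζ]
    (hξζ : ξ ≠ ζ) (A : Matrix (Fin p) (Fin p) ℝ) :
    Tendsto (fun β : ℝ =>
        kolNorm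
          ((kolNorm1 ((β • ξ.toSignedMeasure + (1 - β) • ζ.toSignedMeasure) -
              ζ.toSignedMeasure))⁻¹ •
            ((signedPi (fun _ : Fin p =>
                β • ξ.toSignedMeasure + (1 - β) • ζ.toSignedMeasure)).map A.mulVec -
              (signedPi (fun _ : Fin p => ζ.toSignedMeasure)).map A.mulVec) -
          ∑ k : Fin p,
            (signedPi (fun i => if i = k then
                (kolNorm1 (ξ.toSignedMeasure - ζ.toSignedMeasure))⁻¹ •
                  (ξ.toSignedMeasure - ζ.toSignedMeasure)
              else ζ.toSignedMeasure)).map A.mulVec))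
      (nhdsWithin 0 (Set.Ioo (0 : ℝ) 1)) (nhds 0) :=
  tendsto_normalized_map_signedPi_general ξ ζ A
end

section
/- Let F be a cumulative distribution function on ℝ^p and ρ(x,y) = √(F(x) + F(y) − 2F(x∧y)). Then the pseudometric space (ℝ^p, ρ) is totally bounded. -/
/-!
Let `G i` be the distribution function of the `i`-th marginal of `Q`. A point of
`Iic x \ Iic (x ⊓ y)` has a coordinate `z i` in `(min (x i) (y i), x i]`, so
`ρ(x,y)² = Q(Iic x) + Q(Iic y) - 2 Q(Iic (x ⊓ y)) ≤ ∑ i, |G i (x i) - G i (y i)|`.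
Hence `ρ` is uniformly controlled by the map `x ↦ (G i (x i))ᵢ`, whose range lies in the
compact cube `[0,1]^p`; a finite net of that range pulls back to a finite `ρ`-net.
-/

open MeasureTheory Set

section TotallyBounded

variable {X Y : Type*} [PseudoMetricSpace Y]

theorem exists_finset_forall_exists_lt_of_totallyBounded_range {Φ : X → Y}
    (hΦ : TotallyBounded (range Φ)) {ρ : X → X → ℝ} {ε δ : ℝ} (hδ : 0 < δ)
    (hρ : ∀ x y, dist (Φ x) (Φ y) < δ → ρ x y < ε) :
    ∃ s : Finset X, ∀ x, ∃ y ∈ s, ρ x y < ε := by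
  obtain ⟨t, htΦ, htfin, hcover⟩ := Metric.finite_approx_of_totallyBounded hΦ δ hδ
  obtain ⟨s, -, hsfin, hcover⟩ :=
    exists_subset_image_finite_and (p := fun t => range Φ ⊆ ⋃ y ∈ t, Metric.ball y δ) |>.mp
      ⟨t, (image_univ (f := Φ)).symm ▸ htΦ, htfin, hcover⟩
  refine ⟨hsfin.toFinset, fun x => ?_⟩
  obtain ⟨_, ⟨y, hys, rfl⟩, hxy⟩ := mem_iUnion₂.mp (hcover (mem_range_self x))
  exact ⟨y, hsfin.mem_toFinset.mpr hys, hρ x y hxy⟩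

end TotallyBounded

namespace MeasureTheory.Measure

variable {ι : Type*} (Q : Measure (ι → ℝ)) [IsFiniteMeasure Q]

def marginalCdf (i : ι) (t : ℝ) : ℝ := Q.real {z | z i ≤ t}

theorem monotone_marginalCdf (i : ι) : Monotone (Q.marginalCdf i) :=
  fun _ _ hst => measureReal_mono fun _ hz => le_trans hz hst

theorem marginalCdf_mem_Icc (i : ι) (t : ℝ) : Q.marginalCdf i t ∈ Icc 0 (Q.real univ) :=
  ⟨measureReal_nonneg, measureReal_mono (subset_univ _)⟩

theorem totallyBounded_range_marginalCdf [Finite ι] :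
    TotallyBounded (range fun x : ι → ℝ => fun i => Q.marginalCdf i (x i)) :=
  (isCompact_univ_pi fun _ => isCompact_Icc).totallyBounded.subset <|
    range_subset_iff.mpr fun x => mem_univ_pi.mpr fun i => Q.marginalCdf_mem_Icc i (x i)

variable [Fintype ι]

theorem measureReal_Iic_sub_le_sum_marginalCdf {a b : ι → ℝ} (hab : a ≤ b) :
    Q.real (Iic b) - Q.real (Iic a) ≤ ∑ i, (Q.marginalCdf i (b i) - Q.marginalCdf i (a i)) := by
  have hsub : Iic b \ Iic a ⊆ ⋃ i, ({z | z i ≤ b i} \ {z | z i ≤ a i}) := by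
    rintro z ⟨hzb, hza⟩
    obtain ⟨i, hi⟩ := not_forall.mp hza
    exact mem_iUnion.mpr ⟨i, hzb i, hi⟩
  calc Q.real (Iic b) - Q.real (Iic a) = Q.real (Iic b \ Iic a) :=
        (measureReal_sdiff (Iic_subset_Iic.mpr hab) measurableSet_Iic).symm
    _ ≤ ∑ i, Q.real ({z | z i ≤ b i} \ {z | z i ≤ a i}) :=
        (measureReal_mono hsub).trans (measureReal_iUnion_fintype_le _)
    _ = _ := Finset.sum_congr rfl fun i _ =>
        measureReal_sdiff (fun z hz => le_trans hz (hab i))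
          (measurable_pi_apply i measurableSet_Iic)

theorem measureReal_Iic_add_Iic_sub_two_mul_inf_le (x y : ι → ℝ) :
    Q.real (Iic x) + Q.real (Iic y) - 2 * Q.real (Iic (x ⊓ y)) ≤
      ∑ i, |Q.marginalCdf i (x i) - Q.marginalCdf i (y i)| := by
  have hx := Q.measureReal_Iic_sub_le_sum_marginalCdf (inf_le_left : x ⊓ y ≤ x)
  have hy := Q.measureReal_Iic_sub_le_sum_marginalCdf (inf_le_right : x ⊓ y ≤ y)
  have hcoord : ∀ i, (Q.marginalCdf i (x i) - Q.marginalCdf i ((x ⊓ y) i)) +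
      (Q.marginalCdf i (y i) - Q.marginalCdf i ((x ⊓ y) i)) =
        |Q.marginalCdf i (x i) - Q.marginalCdf i (y i)| := by
    intro i
    rw [Pi.inf_apply, (Q.monotone_marginalCdf i).map_min, ← max_sub_min_eq_abs']
    linarith [min_add_max (Q.marginalCdf i (x i)) (Q.marginalCdf i (y i))]
  rw [← Finset.sum_congr rfl fun i _ => hcoord i, Finset.sum_add_distrib]
  linarith

theorem measureReal_Iic_add_Iic_sub_two_mul_inf_le_card_mul_dist (x y : ι → ℝ) :
    Q.real (Iic x) + Q.real (Iic y) - 2 * Q.real (Iic (x ⊓ y)) ≤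
      Fintype.card ι * dist (fun i => Q.marginalCdf i (x i)) (fun i => Q.marginalCdf i (y i)) := by
  refine (Q.measureReal_Iic_add_Iic_sub_two_mul_inf_le x y).trans ?_
  rw [← Finset.card_univ, ← nsmul_eq_mul]
  exact Finset.sum_le_card_nsmul _ _ _ fun i _ =>
    dist_le_pi_dist (fun i => Q.marginalCdf i (x i)) (fun i => Q.marginalCdf i (y i)) i

end MeasureTheory.Measure

/-- Let `F` be the CDF of a probability measure on ℝ^p and
`ρ(x,y) = √(F(x) + F(y) − 2F(x∧y))`. Then the pseudometric space `(ℝ^p, ρ)` is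
totally bounded: for every `ε > 0` there are finitely many points whose open
`ρ`-balls of radius `ε` cover ℝ^p. -/
theorem cdf_pseudometric_totallyBounded
    {p : ℕ} (Q : Measure (Fin p → ℝ)) [IsProbabilityMeasure Q]
    (F : (Fin p → ℝ) → ℝ) (hF : ∀ x, F x = (Q (Set.Iic x)).toReal)
    (ρ : (Fin p → ℝ) → (Fin p → ℝ) → ℝ)
    (hρ : ∀ x y, ρ x y = Real.sqrt (F x + F y - 2 * F (x ⊓ y))) :
    ∀ ε > (0 : ℝ), ∃ s : Finset (Fin p → ℝ), ∀ x : Fin p → ℝ, ∃ y ∈ s, ρ x y < ε := by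
  intro ε hε
  have hδ : 0 < ε ^ 2 / (p + 1) := by positivity
  refine exists_finset_forall_exists_lt_of_totallyBounded_range
    Q.totallyBounded_range_marginalCdf hδ fun x y hxy => ?_
  have hbound := Q.measureReal_Iic_add_Iic_sub_two_mul_inf_le_card_mul_dist x y
  simp only [Fintype.card_fin, measureReal_def, ← hF] at hbound
  rw [hρ, Real.sqrt_lt' hε]
  calc F x + F y - 2 * F (x ⊓ y) ≤ p * (ε ^ 2 / (p + 1)) :=
        hbound.trans (by gcongr)
    _ < ε ^ 2 := by
        rw [mul_div_assoc', div_lt_iff₀ (by positivity)]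
        nlinarith
end
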